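/- arXiv:2006.02794 — 4 statements merged into one kernel-verified Lean document; each statement's English description precedes it below -/
import Mathlib

section
/- Let S be a set of positive integers and r ≥ 0 an integer. Let E_S(x) be the formal power series over ℚ with coefficient of x^m equal to 1/m! if m ∈ S and 0 otherwise, and let G_S(x) be the formal power series with coefficient of x^m equal to 1/m! if m+1 ∈ S and 0 otherwise (i.e., G_S(x) = Σ_{s∈S} x^{s−1}/(s−1)!). Since E_S(0) = 0, the series 1 − E_S(x) is invertible in ℚ⟦x⟧, and Σ_{n≥0} F_{n,S,r}·x^n/n! = r!·G_S(x)^r·(1 − E_S(x))^{−(r+1)}. -/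
/-! Let `p` mark the elements `1, …, r`. For any finite set `U` with `r` marked and `n` unmarked
elements, the ordered partitions of `U` into blocks with sizes in `S`, each block containing at
most one marked element, number `n! [xⁿ] A_r` with `A_r = r! G_S^r (1 - E_S)^{-(r+1)}`. This goes
by induction on `U`: removing the first block `B` gives `N(U) = ∑_B N(U \ B)`, and grouping the
blocks by their numbers `i ≤ 1` and `j` of marked and unmarked elements turns this into
`N(r, n) = ∑_j C(n, j) ([j ∈ S] N(r, n - j) + r [j + 1 ∈ S] N(r - 1, n - j))`. The coefficients
of `A_r` satisfy the same recursion, since `(1 - E_S) A_r = r G_S A_{r-1}` for `r > 0` and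
`(1 - E_S) A_0 = 1`. Counting over arbitrary finsets, rather than over `Fin (n + r)`, avoids
relabelling the elements left over once a block is removed. -/

open Finset
open scoped Classical

/-- The set of partitions of `{1,…,n+r}` (encoded as `Fin (n+r)`) into `k+r` nonempty
blocks with cardinalities in `S`, the first `r` elements in distinct blocks. -/
def srStirlingSet (S : Set ℕ) (r n k : ℕ) : Set (Finset (Finset (Fin (n + r)))) :=
  {P | (∀ b ∈ P, b.Nonempty ∧ b.card ∈ S) ∧ P.card = k + r ∧
    (∀ x : Fin (n + r), ∃! b, b ∈ P ∧ x ∈ b) ∧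
    ∀ i j : Fin (n + r), (i : ℕ) < r → (j : ℕ) < r → i ≠ j →
      ∀ b ∈ P, i ∈ b → j ∉ b}

/-- The `(S,r)`-Stirling number of the second kind. -/
noncomputable def srStirling (S : Set ℕ) (r n k : ℕ) : ℕ := Nat.card (srStirlingSet S r n k)

/-- The set of ordered set partitions of `{1,…,n+r}` (sequences of pairwise disjoint
nonempty blocks covering everything) with block cardinalities in `S`, the first `r`
elements in distinct blocks. -/
def srFubiniSet (S : Set ℕ) (r n : ℕ) : Set (List (Finset (Fin (n + r)))) :=
  {L | (∀ b ∈ L, b.Nonempty ∧ b.card ∈ S) ∧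
    L.Pairwise (fun b b' => ∀ x ∈ b, x ∉ b') ∧
    (∀ x : Fin (n + r), ∃ b ∈ L, x ∈ b) ∧
    ∀ i j : Fin (n + r), (i : ℕ) < r → (j : ℕ) < r → i ≠ j →
      ∀ b ∈ L, i ∈ b → j ∉ b}

/-- The `(S,r)`-Fubini number `F_{n,S,r}`. -/
noncomputable def srFubini (S : Set ℕ) (r n : ℕ) : ℕ := Nat.card (srFubiniSet S r n)

/-- The `(S,r)`-Fubini number with an integer argument, zero for negative arguments. -/
noncomputable def srFubiniZ (S : Set ℕ) (r : ℕ) (n : ℤ) : ℤ :=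
  if 0 ≤ n then srFubini S r n.toNat else 0

open PowerSeries
open scoped Nat

theorem PowerSeries.factorial_mul_coeff_mul {R : Type*} [CommSemiring R] (n : ℕ) (f g : R⟦X⟧) :
    (n ! : R) * coeff n (f * g) = ∑ ij ∈ antidiagonal n,
      (n.choose ij.1 : R) * (ij.1 ! * coeff ij.1 f) * (ij.2 ! * coeff ij.2 g) := by
  rw [coeff_mul, mul_sum]
  refine sum_congr rfl fun ij hij => ?_
  rw [← mem_antidiagonal.1 hij, ← Nat.add_choose_mul_factorial_mul_factorial ij.1 ij.2,
    Nat.choose_symm_add]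
  push_cast
  ring

section Series

variable (S : Set ℕ)

noncomputable def blockEGF : ℚ⟦X⟧ := mk fun m => if m ∈ S then (1 : ℚ) / m ! else 0

noncomputable def markedBlockEGF : ℚ⟦X⟧ := mk fun m => if m + 1 ∈ S then (1 : ℚ) / m ! else 0

noncomputable def fubiniEGF (r : ℕ) : ℚ⟦X⟧ :=
  C (r ! : ℚ) * markedBlockEGF S ^ r * ((1 - blockEGF S)⁻¹) ^ (r + 1)

noncomputable def fubiniCoeff (r n : ℕ) : ℚ := n ! * coeff n (fubiniEGF S r)

variable {S}

theorem constantCoeff_one_sub_blockEGF (hS : 0 ∉ S) : constantCoeff (1 - blockEGF S) = 1 := by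
  rw [map_sub, map_one, ← coeff_zero_eq_constantCoeff_apply, blockEGF, coeff_mk, if_neg hS,
    sub_zero]

theorem isUnit_one_sub_blockEGF (hS : 0 ∉ S) : IsUnit (1 - blockEGF S) := by
  rw [isUnit_iff_constantCoeff, constantCoeff_one_sub_blockEGF hS]
  exact isUnit_one

theorem fubiniEGF_eq (hS : 0 ∉ S) (r : ℕ) :
    fubiniEGF S r = (if r = 0 then 1 else 0) + blockEGF S * fubiniEGF S r +
      C (r : ℚ) * (markedBlockEGF S * fubiniEGF S (r - 1)) := by
  have hinv : (1 - blockEGF S) * (1 - blockEGF S)⁻¹ = 1 :=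
    PowerSeries.mul_inv_cancel _ (by simp [constantCoeff_one_sub_blockEGF hS])
  suffices (1 - blockEGF S) * fubiniEGF S r =
      (if r = 0 then 1 else 0) + C (r : ℚ) * (markedBlockEGF S * fubiniEGF S (r - 1)) by
    linear_combination this
  cases r with
  | zero => simp [fubiniEGF, hinv]
  | succ r =>
    simp only [fubiniEGF, add_tsub_cancel_right, Nat.factorial_succ, if_neg r.succ_ne_zero,
      zero_add, Nat.cast_mul, map_mul]
    linear_combination (C ((r + 1 : ℕ) : ℚ) * C (r ! : ℚ) * markedBlockEGF S ^ (r + 1) *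
      ((1 - blockEGF S)⁻¹) ^ (r + 1)) * hinv

theorem factorial_mul_coeff_blockEGF (m : ℕ) :
    (m ! : ℚ) * coeff m (blockEGF S) = if m ∈ S then 1 else 0 := by
  split_ifs <;> simp [blockEGF, *, Nat.factorial_ne_zero]

theorem factorial_mul_coeff_markedBlockEGF (m : ℕ) :
    (m ! : ℚ) * coeff m (markedBlockEGF S) = if m + 1 ∈ S then 1 else 0 := by
  split_ifs <;> simp [markedBlockEGF, *, Nat.factorial_ne_zero]

theorem fubiniCoeff_zero_zero (hS : 0 ∉ S) : fubiniCoeff S 0 0 = 1 := by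
  simpa [fubiniCoeff, blockEGF, hS] using congrArg (coeff 0) (fubiniEGF_eq hS 0)

theorem fubiniCoeff_eq_sum (hS : 0 ∉ S) {r n : ℕ} (hrn : r + n ≠ 0) :
    fubiniCoeff S r n = ∑ j ∈ range (n + 1), n.choose j *
      ((if j ∈ S then fubiniCoeff S r (n - j) else 0) +
        r * if j + 1 ∈ S then fubiniCoeff S (r - 1) (n - j) else 0) := by
  have h := congrArg (fun f => (n ! : ℚ) * coeff n f) (fubiniEGF_eq hS r)
  have hδ : coeff n (if r = 0 then 1 else 0 : ℚ⟦X⟧) = 0 := by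
    split_ifs with hr
    · simp [coeff_one, show n ≠ 0 by omega]
    · simp
  simp only [map_add, coeff_C_mul, mul_add, mul_left_comm (n ! : ℚ) (r : ℚ), hδ,
    zero_add, factorial_mul_coeff_mul, Nat.sum_antidiagonal_eq_sum_range_succ_mk,
    factorial_mul_coeff_blockEGF, factorial_mul_coeff_markedBlockEGF, mul_sum] at h
  rw [fubiniCoeff, h, ← sum_add_distrib]
  refine sum_congr rfl fun j _ => ?_
  simp only [fubiniCoeff]
  split_ifs <;> ring

end Series

section FinsetSums

variable {α : Type*} {p : α → Prop} [DecidablePred p]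

theorem sum_powerset_eq_sum_choose {M : Type*} [AddCommMonoid M] (U : Finset α) (h : ℕ → ℕ → M) :
    ∑ B ∈ U.powerset, h (B.filter p).card (B.filter (¬p ·)).card =
      ∑ i ∈ range ((U.filter p).card + 1), (U.filter p).card.choose i •
        ∑ j ∈ range ((U.filter (¬p ·)).card + 1), (U.filter (¬p ·)).card.choose j • h i j := by
  classical
  calc ∑ B ∈ U.powerset, h (B.filter p).card (B.filter (¬p ·)).card
      = ∑ P ∈ (U.filter p).powerset, ∑ Q ∈ (U.filter (¬p ·)).powerset, h P.card Q.card := by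
        rw [← sum_product']
        refine sum_nbij' (fun B => (B.filter p, B.filter (¬p ·))) (fun x => x.1 ∪ x.2)
          ?_ ?_ ?_ ?_ ?_
        · intro B hB
          simp only [mem_product, mem_powerset] at hB ⊢
          exact ⟨filter_subset_filter _ hB, filter_subset_filter _ hB⟩
        · rintro ⟨P, Q⟩ hPQ
          simp only [mem_product, mem_powerset] at hPQ ⊢
          exact union_subset (hPQ.1.trans (filter_subset _ _)) (hPQ.2.trans (filter_subset _ _))
        · intro B _
          exact filter_union_filter_not_eq p B
        · rintro ⟨P, Q⟩ hPQ
          simp only [mem_product, mem_powerset, subset_iff, mem_filter] at hPQ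
          ext y <;> grind
        · intro B _
          rfl
    _ = _ := by
      simp_rw [sum_powerset_apply_card (h _)]
      exact sum_powerset_apply_card fun i =>
        ∑ j ∈ range ((U.filter (¬p ·)).card + 1), (U.filter (¬p ·)).card.choose j • h i j

theorem sum_range_choose_smul_eq_of_two_le {M : Type*} [AddCommMonoid M] (r : ℕ) {g : ℕ → M}
    (hg : ∀ i, 2 ≤ i → g i = 0) : ∑ i ∈ range (r + 1), r.choose i • g i = g 0 + r • g 1 := by
  rcases r with _ | r
  · simp
  · rw [sum_range_succ', sum_range_succ', sum_eq_zero fun i _ => by rw [hg _ (by omega), smul_zero]]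
    simp [add_comm]

theorem card_filter_sdiff_of_subset [DecidableEq α] {U B : Finset α} (h : B ⊆ U) :
    ((U \ B).filter p).card = (U.filter p).card - (B.filter p).card := by
  rw [← card_sdiff_of_subset (filter_subset_filter p h)]
  congr 1
  ext
  simp only [mem_filter, mem_sdiff]
  tauto

end FinsetSums

section OrderedPartition

variable {α : Type*} (S : Set ℕ) (p : α → Prop) [DecidablePred p]

-- `p` marks the elements (the paper's `1, …, r`) that must lie in distinct blocks.
def IsBlock (B : Finset α) : Prop :=
  B.Nonempty ∧ B.card ∈ S ∧ (B.filter p).card ≤ 1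

def IsOrderedPartition (U : Finset α) (L : List (Finset α)) : Prop :=
  (∀ B ∈ L, IsBlock S p B) ∧ L.Pairwise Disjoint ∧ ∀ x, x ∈ U ↔ ∃ B ∈ L, x ∈ B

variable {S p}

theorem isOrderedPartition_nil {U : Finset α} : IsOrderedPartition S p U [] ↔ U = ∅ := by
  simp [IsOrderedPartition, Finset.eq_empty_iff_forall_notMem]

theorem isBlock_iff (hS : 0 ∉ S) {B : Finset α} :
    IsBlock S p B ↔ (B.filter p).card ≤ 1 ∧ (B.filter p).card + (B.filter (¬p ·)).card ∈ S := by
  rw [IsBlock, card_filter_add_card_filter_not, ← card_pos]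
  exact ⟨fun h => ⟨h.2.2, h.2.1⟩,
    fun h => ⟨Nat.pos_of_ne_zero (ne_of_mem_of_not_mem h.2 hS), h.2, h.1⟩⟩

theorem IsOrderedPartition.nodup {U : Finset α} {L : List (Finset α)}
    (hL : IsOrderedPartition S p U L) : L.Nodup := by
  refine hL.2.1.imp_of_mem fun hB _ hdisj hBB => ?_
  subst hBB
  exact (hL.1 _ hB).1.ne_empty (disjoint_self.1 hdisj)

instance [Fintype α] (U : Finset α) : Finite {L // IsOrderedPartition S p U L} :=
  ((List.finite_length_le _ (Fintype.card (Finset α))).subset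
    fun _ hL => List.Nodup.length_le_card (IsOrderedPartition.nodup hL)).to_subtype

variable [DecidableEq α]

theorem isOrderedPartition_cons {U B : Finset α} {T : List (Finset α)} :
    IsOrderedPartition S p U (B :: T) ↔
      IsBlock S p B ∧ B ⊆ U ∧ IsOrderedPartition S p (U \ B) T := by
  simp only [IsOrderedPartition, List.mem_cons, forall_eq_or_imp, List.pairwise_cons,
    exists_eq_or_imp, Finset.mem_sdiff]
  constructor
  · rintro ⟨⟨hB, hT⟩, ⟨hdisj, hpw⟩, hcover⟩
    refine ⟨hB, fun x hx => (hcover x).2 (Or.inl hx), hT, hpw, fun x => ⟨?_, ?_⟩⟩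
    · rintro ⟨hxU, hxB⟩
      exact ((hcover x).1 hxU).resolve_left hxB
    · rintro ⟨C, hC, hxC⟩
      exact ⟨(hcover x).2 (Or.inr ⟨C, hC, hxC⟩), Finset.disjoint_right.1 (hdisj C hC) hxC⟩
  · rintro ⟨hB, hBU, hT, hpw, hcover⟩
    refine ⟨⟨hB, hT⟩, ⟨fun C hC => Finset.disjoint_right.2 fun x hxC => ?_, hpw⟩, fun x => ?_⟩
    · exact ((hcover x).2 ⟨C, hC, hxC⟩).2
    · rw [← hcover]
      by_cases hxB : x ∈ B
      · simp [hxB, hBU hxB]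
      · simp [hxB]

def orderedPartitionConsEquiv {U : Finset α} (hU : U.Nonempty) :
    (Σ B : {B // B ∈ U.powerset.filter (IsBlock S p)}, {T // IsOrderedPartition S p (U \ B) T}) ≃
      {L // IsOrderedPartition S p U L} where
  toFun x := ⟨x.1.1 :: x.2.1, isOrderedPartition_cons.2
    ⟨(Finset.mem_filter.1 x.1.2).2, Finset.mem_powerset.1 (Finset.mem_filter.1 x.1.2).1, x.2.2⟩⟩
  invFun
    | ⟨[], hL⟩ => absurd (isOrderedPartition_nil.1 hL) hU.ne_empty
    | ⟨B :: T, hL⟩ =>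
      have h := isOrderedPartition_cons.1 hL
      ⟨⟨B, Finset.mem_filter.2 ⟨Finset.mem_powerset.2 h.2.1, h.1⟩⟩, ⟨T, h.2.2⟩⟩
  left_inv _ := rfl
  right_inv
    | ⟨[], hL⟩ => absurd (isOrderedPartition_nil.1 hL) hU.ne_empty
    | ⟨_ :: _, _⟩ => rfl

theorem card_orderedPartition_eq_sum [Fintype α] {U : Finset α} (hU : U.Nonempty) :
    Nat.card {L // IsOrderedPartition S p U L} =
      ∑ B ∈ U.powerset.filter (IsBlock S p), Nat.card {T // IsOrderedPartition S p (U \ B) T} := by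
  rw [← Nat.card_congr (orderedPartitionConsEquiv hU), Nat.card_sigma]
  exact sum_coe_sort _ fun B => Nat.card {T // IsOrderedPartition S p (U \ B) T}

theorem card_orderedPartition_empty : Nat.card {L // IsOrderedPartition S p ∅ L} = 1 := by
  refine Nat.card_eq_one_iff_exists.2 ⟨⟨[], isOrderedPartition_nil.2 rfl⟩, ?_⟩
  rintro ⟨_ | ⟨B, T⟩, hL⟩
  · rfl
  · obtain ⟨⟨hB, -⟩, hBU, -⟩ := isOrderedPartition_cons.1 hL
    simp [Finset.subset_empty.1 hBU] at hB

theorem card_orderedPartition [Fintype α] (hS : 0 ∉ S) (U : Finset α) :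
    (Nat.card {L // IsOrderedPartition S p U L} : ℚ) =
      fubiniCoeff S (U.filter p).card (U.filter (¬p ·)).card := by
  induction U using Finset.strongInduction with
  | H U ih =>
  rcases U.eq_empty_or_nonempty with rfl | hU
  · simp [card_orderedPartition_empty, fubiniCoeff_zero_zero hS]
  set r := (U.filter p).card
  set n := (U.filter (¬p ·)).card
  have hrn : r + n ≠ 0 := by
    rw [card_filter_add_card_filter_not]; exact hU.card_pos.ne'
  let term i j : ℚ := if i ≤ 1 ∧ i + j ∈ S then fubiniCoeff S (r - i) (n - j) else 0
  calc (Nat.card {L // IsOrderedPartition S p U L} : ℚ)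
      = ∑ B ∈ U.powerset.filter (IsBlock S p),
          (Nat.card {T // IsOrderedPartition S p (U \ B) T} : ℚ) := by
        rw [card_orderedPartition_eq_sum hU]; push_cast; rfl
    _ = ∑ B ∈ U.powerset, term (B.filter p).card (B.filter (¬p ·)).card := by
        rw [sum_filter]
        refine sum_congr rfl fun B hB => ?_
        rw [mem_powerset] at hB
        simp only [term, ← isBlock_iff hS]
        split_ifs with hBlock
        · rw [ih _ (sdiff_ssubset hB hBlock.1), card_filter_sdiff_of_subset hB,
            card_filter_sdiff_of_subset hB]
        · rfl
    _ = ∑ j ∈ range (n + 1), n.choose j • term 0 j +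
          r • ∑ j ∈ range (n + 1), n.choose j • term 1 j := by
        rw [sum_powerset_eq_sum_choose, sum_range_choose_smul_eq_of_two_le]
        intro i hi
        exact sum_eq_zero fun j _ => by simp [term, show ¬ i ≤ 1 by omega]
    _ = fubiniCoeff S r n := by
        rw [fubiniCoeff_eq_sum hS hrn, smul_sum, ← sum_add_distrib]
        refine sum_congr rfl fun j _ => ?_
        simp only [term, nsmul_eq_mul, zero_le, zero_add, le_refl, true_and, tsub_zero, add_comm 1 j]
        ring

end OrderedPartition

theorem srFubiniSet_eq (S : Set ℕ) (r n : ℕ) :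
    srFubiniSet S r n = {L | IsOrderedPartition S (fun x : Fin (n + r) => (x : ℕ) < r) univ L} := by
  ext L
  have hdisj : (Disjoint : Finset (Fin (n + r)) → _ → Prop) = fun b b' => ∀ x ∈ b, x ∉ b' := by
    ext; exact Finset.disjoint_left
  simp only [srFubiniSet, IsOrderedPartition, IsBlock, Set.mem_ofPred_eq, mem_univ, true_iff,
    Finset.card_le_one, mem_filter, hdisj]
  constructor
  · rintro ⟨hblocks, hpw, hcover, hsep⟩
    refine ⟨fun B hB => ⟨(hblocks B hB).1, (hblocks B hB).2, fun a ha b hb => ?_⟩, hpw, hcover⟩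
    by_contra hab
    exact hsep a b ha.2 hb.2 hab B hB ha.1 hb.1
  · rintro ⟨hblocks, hpw, hcover⟩
    refine ⟨fun B hB => ⟨(hblocks B hB).1, (hblocks B hB).2.1⟩, hpw, hcover, ?_⟩
    exact fun i j hi hj hij B hB hiB hjB => hij ((hblocks B hB).2.2 i ⟨hiB, hi⟩ j ⟨hjB, hj⟩)

theorem srFubini_eq_fubiniCoeff {S : Set ℕ} (hS : 0 ∉ S) (r n : ℕ) :
    (srFubini S r n : ℚ) = fubiniCoeff S r n := by
  have hr : (univ.filter fun x : Fin (n + r) => (x : ℕ) < r).card = r := by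
    rw [Fin.card_filter_val_lt]
    omega
  have hn : (univ.filter fun x : Fin (n + r) => ¬ (x : ℕ) < r).card = n := by
    have := card_filter_add_card_filter_not (s := univ) fun x : Fin (n + r) => (x : ℕ) < r
    rw [hr, card_univ, Fintype.card_fin] at this
    omega
  have h := card_orderedPartition (p := fun x : Fin (n + r) => (x : ℕ) < r) hS univ
  rw [hr, hn] at h
  rw [srFubini, srFubiniSet_eq]
  exact h

/-- the EGF of the `(S,r)`-Fubini numbers is
`r!·G_S(x)^r·(1 − E_S(x))^{−(r+1)}`, the series `1 − E_S(x)` being invertible. -/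
theorem srFubini_egf (S : Set ℕ) (hS : ∀ s ∈ S, 0 < s) (r : ℕ) :
    IsUnit (1 - PowerSeries.mk fun m => if m ∈ S then (1 : ℚ) / m.factorial else 0) ∧
    PowerSeries.mk (fun n => (srFubini S r n : ℚ) / n.factorial) =
      PowerSeries.C (r.factorial : ℚ) *
        (PowerSeries.mk fun m => if m + 1 ∈ S then (1 : ℚ) / m.factorial else 0) ^ r *
        ((1 - PowerSeries.mk fun m => if m ∈ S then (1 : ℚ) / m.factorial else 0)⁻¹) ^ (r + 1) := by
  have hS0 : 0 ∉ S := fun h => (hS 0 h).false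
  refine ⟨isUnit_one_sub_blockEGF hS0, ?_⟩
  change _ = fubiniEGF S r
  ext n
  rw [coeff_mk, srFubini_eq_fubiniCoeff hS0, fubiniCoeff, mul_div_cancel_left₀ _ (by positivity)]
end

section
/- Let S be a set of positive integers, r ≥ 1 an integer, and n ≥ 0 an integer. Then F_{n,S,r} = Σ_{s∈S} C(n,s)·F_{n−s,S,r} + r·Σ_{s∈S} C(n, s−1)·F_{n−(s−1), S, r−1}, where F_{m,S,r} = 0 for m < 0 and both sums have only finitely many nonzero terms. -/
open Finset
open scoped Classical

/-!
Sort the ordered partitions by their first block `B`. Either `B` avoids the `r` special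
elements, and there are `C(n, s)` such blocks of size `s`, after which the rest is an ordered
partition counted by `F_{n-s,S,r}`; or `B` contains exactly one special element, and there are
`r * C(n, s - 1)` such blocks, after which the rest is counted by `F_{n-(s-1),S,r-1}`.
To recognise the remainders as `(S,r)`-Fubini numbers, the count is set up for an arbitrary
finite ground set `G` with special elements `R ⊆ G`, where it is invariant under relabelling
and so depends only on `#(G \ R)` and `#R`.
-/

section OrderedPartitions

variable {α β : Type*}

theorem sum_powerset_filter_card {M : Type*} [AddCommMonoid M] (P : Finset α) (p : ℕ → Prop)
    [DecidablePred p] (g : ℕ → M) :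
    ∑ B ∈ P.powerset with p #B, g #B =
      ∑ m ∈ range (#P + 1), if p m then (#P).choose m • g m else 0 := by
  simp_rw [sum_filter, sum_powerset_apply_card (fun m => if p m then g m else 0), smul_ite,
    smul_zero]

theorem exists_map_eq_of_forall_subset_map (e : α ↪ β) {G : Finset α} :
    ∀ {L' : List (Finset β)}, (∀ b' ∈ L', b' ⊆ G.map e) →
      ∃ L : List (Finset α), L.map (map e) = L'
  | [], _ => ⟨[], rfl⟩
  | b' :: t', h => by
    obtain ⟨b, -, rfl⟩ := subset_map_iff.1 (h b' List.mem_cons_self)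
    obtain ⟨t, rfl⟩ :=
      exists_map_eq_of_forall_subset_map e fun c hc => h c (List.mem_cons_of_mem _ hc)
    exact ⟨b :: t, rfl⟩

variable [DecidableEq α] [DecidableEq β] (S : Set ℕ)

noncomputable def admissibleBlocks (G R : Finset α) : Finset (Finset α) :=
  {b ∈ G.powerset | b.Nonempty ∧ #b ∈ S ∧ #(b ∩ R) ≤ 1}

def orderedPartitions (G R : Finset α) : Set (List (Finset α)) :=
  {L | (∀ b ∈ L, b ∈ admissibleBlocks S G R) ∧ L.Pairwise Disjoint ∧
    ∀ x ∈ G, ∃ b ∈ L, x ∈ b}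

variable {S}

theorem mem_admissibleBlocks {G R b : Finset α} :
    b ∈ admissibleBlocks S G R ↔ b ⊆ G ∧ b.Nonempty ∧ #b ∈ S ∧ #(b ∩ R) ≤ 1 := by
  rw [admissibleBlocks, mem_filter, mem_powerset]

theorem map_mem_admissibleBlocks_map_iff (e : α ↪ β) {G R b : Finset α} :
    b.map e ∈ admissibleBlocks S (G.map e) (R.map e) ↔ b ∈ admissibleBlocks S G R := by
  simp only [mem_admissibleBlocks, map_subset_map, map_nonempty, card_map, ← map_inter]

theorem map_mem_orderedPartitions_map_iff (e : α ↪ β) {G R : Finset α} {L : List (Finset α)} :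
    L.map (map e) ∈ orderedPartitions S (G.map e) (R.map e) ↔
      L ∈ orderedPartitions S G R := by
  simp [orderedPartitions, map_mem_admissibleBlocks_map_iff, List.pairwise_map]

theorem orderedPartitions_map (e : α ↪ β) (G R : Finset α) :
    orderedPartitions S (G.map e) (R.map e) = List.map (map e) '' orderedPartitions S G R := by
  ext L'
  refine ⟨fun hL' => ?_, ?_⟩
  · obtain ⟨L, rfl⟩ := exists_map_eq_of_forall_subset_map e fun b' hb' =>
      (mem_admissibleBlocks.1 (hL'.1 b' hb')).1
    exact ⟨L, (map_mem_orderedPartitions_map_iff e).1 hL', rfl⟩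
  · rintro ⟨L, hL, rfl⟩
    exact (map_mem_orderedPartitions_map_iff e).2 hL

theorem card_orderedPartitions_map (e : α ↪ β) (G R : Finset α) :
    Nat.card (orderedPartitions S (G.map e) (R.map e)) = Nat.card (orderedPartitions S G R) := by
  rw [orderedPartitions_map, Nat.card_coe_set_eq, Nat.card_coe_set_eq,
    Set.ncard_image_of_injective _ (List.map_injective_iff.2 (map_injective e))]

noncomputable def enumSpecialFirst (G R : Finset α) : Fin (#(G \ R) + #R) → α := fun i =>
  if h : (i : ℕ) < #R then R.equivFin.symm ⟨i, h⟩
  else (G \ R).equivFin.symm ⟨i - #R, by omega⟩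

theorem enumSpecialFirst_mem_iff (G R : Finset α) (i : Fin (#(G \ R) + #R)) :
    enumSpecialFirst G R i ∈ R ↔ (i : ℕ) < #R := by
  by_cases h : (i : ℕ) < #R
  · simp [enumSpecialFirst, h]
  · simpa [enumSpecialFirst, h] using (mem_sdiff.1 (coe_mem _)).2

theorem enumSpecialFirst_mem {G R : Finset α} (hRG : R ⊆ G) (i : Fin (#(G \ R) + #R)) :
    enumSpecialFirst G R i ∈ G := by
  by_cases h : (i : ℕ) < #R
  · simpa [enumSpecialFirst, h] using hRG (coe_mem _)
  · simpa [enumSpecialFirst, h] using (mem_sdiff.1 (coe_mem _)).1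

theorem enumSpecialFirst_injective (G R : Finset α) :
    Function.Injective (enumSpecialFirst G R) := by
  intro i j hij
  have hiff : (i : ℕ) < #R ↔ (j : ℕ) < #R := by
    rw [← enumSpecialFirst_mem_iff, ← enumSpecialFirst_mem_iff, hij]
  by_cases hi : (i : ℕ) < #R
  · simp only [enumSpecialFirst, dif_pos hi, dif_pos (hiff.1 hi), Subtype.val_inj,
      Equiv.apply_eq_iff_eq, Fin.mk.injEq] at hij
    exact Fin.ext hij
  · simp only [enumSpecialFirst, dif_neg hi, dif_neg (mt hiff.2 hi), Subtype.val_inj,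
      Equiv.apply_eq_iff_eq, Fin.mk.injEq] at hij
    omega

theorem exists_enumSpecialFirst_eq {G R : Finset α} {a : α} (ha : a ∈ G) :
    ∃ i, enumSpecialFirst G R i = a := by
  by_cases haR : a ∈ R
  · exact ⟨⟨R.equivFin ⟨a, haR⟩, by omega⟩, by simp [enumSpecialFirst]⟩
  · exact ⟨⟨(G \ R).equivFin ⟨a, mem_sdiff.2 ⟨ha, haR⟩⟩ + #R, by omega⟩,
      by simp [enumSpecialFirst]⟩

theorem image_enumSpecialFirst {G R : Finset α} (hRG : R ⊆ G) :
    univ.image (enumSpecialFirst G R) = G ∧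
      ({i | (i : ℕ) < #R} : Finset (Fin _)).image (enumSpecialFirst G R) = R := by
  refine ⟨ext fun a => ?_, ext fun a => ?_⟩
  · simp only [mem_image, mem_univ, true_and]
    exact ⟨fun ⟨i, hi⟩ => hi ▸ enumSpecialFirst_mem hRG i, exists_enumSpecialFirst_eq⟩
  · simp only [mem_image, mem_filter, mem_univ, true_and]
    refine ⟨fun ⟨i, hi, hia⟩ => hia ▸ (enumSpecialFirst_mem_iff G R i).2 hi, fun ha => ?_⟩
    obtain ⟨i, rfl⟩ := exists_enumSpecialFirst_eq (R := R) (hRG ha)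
    exact ⟨i, (enumSpecialFirst_mem_iff G R i).1 ha, rfl⟩

theorem srFubiniSet_eq_orderedPartitions (r n : ℕ) :
    srFubiniSet S r n =
      orderedPartitions S univ ({i | (i : ℕ) < r} : Finset (Fin (n + r))) := by
  ext L
  simp only [srFubiniSet, orderedPartitions, mem_admissibleBlocks, Set.mem_ofPred_eq,
    card_le_one, mem_inter, mem_filter, mem_univ, true_and, subset_univ, forall_const]
  constructor
  · rintro ⟨hblock, hpair, hcover, hsep⟩
    refine ⟨fun b hb => ⟨(hblock b hb).1, (hblock b hb).2, fun i hi j hj => ?_⟩,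
      hpair.imp disjoint_left.2, hcover⟩
    by_contra hij
    exact hsep i j hi.2 hj.2 hij b hb hi.1 hj.1
  · rintro ⟨hblock, hpair, hcover⟩
    exact ⟨fun b hb => ⟨(hblock b hb).1, (hblock b hb).2.1⟩, hpair.imp disjoint_left.1,
      hcover,
      fun i j hi hj hij b hb hib hjb => hij ((hblock b hb).2.2 i ⟨hib, hi⟩ j ⟨hjb, hj⟩)⟩

theorem card_orderedPartitions_eq_srFubini {G R : Finset α} (hRG : R ⊆ G) :
    Nat.card (orderedPartitions S G R) = srFubini S #R #(G \ R) := by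
  let e : Fin (#(G \ R) + #R) ↪ α := ⟨_, enumSpecialFirst_injective G R⟩
  obtain ⟨hG, hR⟩ := image_enumSpecialFirst hRG
  rw [srFubini, srFubiniSet_eq_orderedPartitions, ← card_orderedPartitions_map e]
  simp only [e, map_eq_image, Function.Embedding.coeFn_mk, hG, hR]

theorem mem_admissibleBlocks_sdiff_iff {G R B b : Finset α} :
    b ∈ admissibleBlocks S (G \ B) (R \ B) ↔ b ∈ admissibleBlocks S G R ∧ Disjoint B b := by
  simp only [mem_admissibleBlocks, subset_sdiff, ← inter_sdiff_assoc, disjoint_comm (a := B)]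
  constructor
  · rintro ⟨⟨hbG, hbB⟩, hne, hcard, hR⟩
    rw [sdiff_eq_self_of_disjoint (hbB.mono_left inter_subset_left)] at hR
    exact ⟨⟨hbG, hne, hcard, hR⟩, hbB⟩
  · rintro ⟨⟨hbG, hne, hcard, hR⟩, hbB⟩
    exact ⟨⟨hbG, hbB⟩, hne, hcard, (card_le_card sdiff_subset).trans hR⟩

theorem cons_mem_orderedPartitions_iff {G R B : Finset α} {t : List (Finset α)} :
    B :: t ∈ orderedPartitions S G R ↔
      B ∈ admissibleBlocks S G R ∧ t ∈ orderedPartitions S (G \ B) (R \ B) := by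
  simp only [orderedPartitions, Set.mem_ofPred_eq, List.pairwise_cons, forall_eq_or_imp,
    mem_admissibleBlocks_sdiff_iff, forall_and, List.mem_cons, or_and_right, exists_or,
    exists_eq_left, mem_sdiff, and_imp]
  constructor
  · rintro ⟨⟨hB, ht⟩, ⟨hBt, hpair⟩, hcover⟩
    refine ⟨hB, ⟨ht, hBt⟩, hpair, fun x hx hxB => (hcover x hx).resolve_left hxB⟩
  · rintro ⟨hB, ⟨ht, hBt⟩, hpair, hcover⟩
    refine ⟨⟨hB, ht⟩, ⟨hBt, hpair⟩, fun x hx => ?_⟩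
    by_cases hxB : x ∈ B
    · exact Or.inl hxB
    · exact Or.inr (hcover x hx hxB)

theorem orderedPartitions_eq_biUnion {G R : Finset α} (hG : G.Nonempty) :
    orderedPartitions S G R =
      ⋃ B ∈ (admissibleBlocks S G R : Set (Finset α)),
        List.cons B '' orderedPartitions S (G \ B) (R \ B) := by
  ext L
  cases L with
  | nil =>
    obtain ⟨x, hx⟩ := hG
    simp only [Set.mem_iUnion, Set.mem_image, reduceCtorEq, and_false, exists_false, iff_false]
    exact fun h => by simpa using h.2.2 x hx
  | cons B t =>
    simp [cons_mem_orderedPartitions_iff, and_comm]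

theorem orderedPartitions_finite [Fintype α] (G R : Finset α) :
    (orderedPartitions S G R).Finite := by
  refine (List.finite_length_le (Finset α) (Fintype.card (Finset α))).subset fun L hL => ?_
  have hnodup : L.Nodup := hL.2.1.imp_of_mem fun hb _ hbb' hbeq => by
    obtain ⟨x, hx⟩ := (mem_admissibleBlocks.1 (hL.1 _ hb)).2.1
    exact disjoint_left.1 hbb' hx (hbeq ▸ hx)
  exact hnodup.length_le_card

theorem card_orderedPartitions_eq_sum [Fintype α] {G R : Finset α} (hG : G.Nonempty) :
    Nat.card (orderedPartitions S G R) =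
      ∑ B ∈ admissibleBlocks S G R, Nat.card (orderedPartitions S (G \ B) (R \ B)) := by
  have hdisj : (admissibleBlocks S G R : Set (Finset α)).PairwiseDisjoint
      fun B => List.cons B '' orderedPartitions S (G \ B) (R \ B) := by
    rintro B - B' - hne
    refine Set.disjoint_left.2 ?_
    rintro _ ⟨t, -, rfl⟩ ⟨t', -, h⟩
    exact hne (List.cons_eq_cons.1 h).1.symm
  rw [Nat.card_coe_set_eq, orderedPartitions_eq_biUnion hG,
    Set.Finite.ncard_biUnion (finite_toSet _)
      (fun B _ => (orderedPartitions_finite _ _).image _) hdisj, finsum_mem_coe_finset]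
  refine sum_congr rfl fun B _ => ?_
  rw [Set.ncard_image_of_injective _ List.cons_injective, Nat.card_coe_set_eq]

theorem insert_inter_eq_singleton {x : α} {C R : Finset α} (hx : x ∈ R) (hC : Disjoint C R) :
    insert x C ∩ R = {x} := by
  rw [insert_inter_of_mem hx, disjoint_iff_inter_eq_empty.1 hC, insert_empty]

theorem insert_sdiff_eq_of_disjoint {x : α} {C R : Finset α} (hx : x ∈ R) (hC : Disjoint C R) :
    insert x C \ R = C := by
  rw [insert_sdiff_of_mem C hx, sdiff_eq_self_of_disjoint hC]

theorem filter_disjoint_admissibleBlocks (hS : ∀ s ∈ S, 0 < s) (G R : Finset α) :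
    {B ∈ admissibleBlocks S G R | Disjoint B R} = {B ∈ (G \ R).powerset | #B ∈ S} := by
  ext B
  simp only [mem_filter, mem_admissibleBlocks, mem_powerset, subset_sdiff]
  constructor
  · rintro ⟨⟨hBG, -, hB, -⟩, hBR⟩
    exact ⟨⟨hBG, hBR⟩, hB⟩
  · rintro ⟨⟨hBG, hBR⟩, hB⟩
    refine ⟨⟨hBG, card_pos.1 (hS _ hB), hB, ?_⟩, hBR⟩
    simp [disjoint_iff_inter_eq_empty.1 hBR]

theorem sum_admissibleBlocks_not_disjoint {M : Type*} [AddCommMonoid M] {G R : Finset α}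
    (hRG : R ⊆ G) (f : Finset α → M) :
    ∑ B ∈ admissibleBlocks S G R with ¬Disjoint B R, f B =
      ∑ x ∈ R, ∑ C ∈ (G \ R).powerset with #C + 1 ∈ S, f (insert x C) := by
  rw [← sum_product']
  symm
  refine sum_nbij (fun p => insert p.1 p.2) ?_ ?_ ?_ fun _ _ => rfl
  · rintro ⟨x, C⟩ hxC
    simp only [mem_product, mem_filter, mem_powerset, subset_sdiff] at hxC
    obtain ⟨hx, ⟨hCG, hCR⟩, hC⟩ := hxC
    have hxC : x ∉ C := fun h => disjoint_left.1 hCR h hx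
    simp only [mem_filter, mem_admissibleBlocks, card_insert_of_notMem hxC,
      insert_inter_eq_singleton hx hCR, card_singleton, not_disjoint_iff]
    exact ⟨⟨insert_subset (hRG hx) hCG, insert_nonempty _ _, hC, le_rfl⟩,
      x, mem_insert_self _ _, hx⟩
  · rintro ⟨x, C⟩ hxC ⟨y, D⟩ hyD h
    simp only [coe_product, coe_filter, Set.mem_prod, mem_coe, Set.mem_ofPred_eq, mem_powerset,
      subset_sdiff] at hxC hyD
    obtain ⟨hx, ⟨-, hCR⟩, -⟩ := hxC
    obtain ⟨hy, ⟨-, hDR⟩, -⟩ := hyD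
    have hxy : ({x} : Finset α) = {y} := by
      rw [← insert_inter_eq_singleton hx hCR, ← insert_inter_eq_singleton hy hDR]
      exact congrArg (· ∩ R) h
    have hCD : C = D := by
      rw [← insert_sdiff_eq_of_disjoint hx hCR, ← insert_sdiff_eq_of_disjoint hy hDR]
      exact congrArg (· \ R) h
    rw [singleton_inj.1 hxy, hCD]
  · intro B hB
    simp only [coe_filter, mem_admissibleBlocks, Set.mem_ofPred_eq] at hB
    obtain ⟨⟨hBG, -, hB, hBR⟩, hBR'⟩ := hB
    obtain ⟨x, hx⟩ := card_eq_one.1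
      (le_antisymm hBR (card_pos.2 (not_disjoint_iff_nonempty_inter.1 hBR')))
    have hxR : x ∈ R := (mem_inter.1 (hx ▸ mem_singleton_self x)).2
    have hinsert : insert x (B \ R) = B := by
      rw [insert_eq, ← hx, union_comm, sdiff_union_inter]
    refine ⟨(x, B \ R), ?_, hinsert⟩
    simp only [coe_product, coe_filter, Set.mem_prod, mem_coe, Set.mem_ofPred_eq, mem_powerset]
    refine ⟨hxR, sdiff_subset_sdiff hBG subset_rfl, ?_⟩
    rwa [← card_insert_of_notMem fun h => (mem_sdiff.1 h).2 hxR, hinsert]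

theorem sum_admissibleBlocks {M : Type*} [AddCommMonoid M] (hS : ∀ s ∈ S, 0 < s)
    {G R : Finset α} (hRG : R ⊆ G) (f : Finset α → M) :
    ∑ B ∈ admissibleBlocks S G R, f B =
      ∑ B ∈ (G \ R).powerset with #B ∈ S, f B +
        ∑ x ∈ R, ∑ C ∈ (G \ R).powerset with #C + 1 ∈ S, f (insert x C) := by
  rw [← sum_filter_add_sum_filter_not _ (fun B => Disjoint B R),
    filter_disjoint_admissibleBlocks hS, sum_admissibleBlocks_not_disjoint hRG]

theorem sdiff_sdiff_sdiff_eq (G R B : Finset α) : (G \ B) \ (R \ B) = (G \ R) \ (B \ R) := by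
  ext x
  simp only [mem_sdiff]
  tauto

theorem card_orderedPartitions_sdiff {G R B : Finset α} (hRG : R ⊆ G) (hBG : B ⊆ G) :
    Nat.card (orderedPartitions S (G \ B) (R \ B)) =
      srFubini S (#R - #(B ∩ R)) (#(G \ R) - #(B \ R)) := by
  rw [card_orderedPartitions_eq_srFubini (sdiff_subset_sdiff hRG subset_rfl), card_sdiff,
    sdiff_sdiff_sdiff_eq, card_sdiff_of_subset (sdiff_subset_sdiff hBG subset_rfl)]

theorem card_orderedPartitions_eq_sum_choose [Fintype α] (hS : ∀ s ∈ S, 0 < s)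
    {G R : Finset α} (hRG : R ⊆ G) (hG : G.Nonempty) :
    Nat.card (orderedPartitions S G R) =
      ∑ m ∈ range (#(G \ R) + 1),
          (if m ∈ S then (#(G \ R)).choose m * srFubini S #R (#(G \ R) - m) else 0) +
        #R * ∑ m ∈ range (#(G \ R) + 1),
          (if m + 1 ∈ S then (#(G \ R)).choose m * srFubini S (#R - 1) (#(G \ R) - m)
            else 0) := by
  rw [card_orderedPartitions_eq_sum hG,
    sum_congr rfl fun B hB => card_orderedPartitions_sdiff hRG (mem_admissibleBlocks.1 hB).1,
    sum_admissibleBlocks hS hRG]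
  congr 1
  · calc _ = ∑ B ∈ (G \ R).powerset with #B ∈ S, srFubini S #R (#(G \ R) - #B) := by
          refine sum_congr rfl fun B hB => ?_
          have hBR : Disjoint B R := (subset_sdiff.1 (mem_powerset.1 (mem_filter.1 hB).1)).2
          rw [disjoint_iff_inter_eq_empty.1 hBR, sdiff_eq_self_of_disjoint hBR, card_empty,
            Nat.sub_zero]
      _ = _ := by
          rw [sum_powerset_filter_card (G \ R) (· ∈ S) fun m => srFubini S #R (#(G \ R) - m)]
          simp only [smul_eq_mul]
  · calc _ = ∑ _x ∈ R, ∑ C ∈ (G \ R).powerset with #C + 1 ∈ S,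
              srFubini S (#R - 1) (#(G \ R) - #C) := by
          refine sum_congr rfl fun x hx => sum_congr rfl fun C hC => ?_
          have hCR : Disjoint C R := (subset_sdiff.1 (mem_powerset.1 (mem_filter.1 hC).1)).2
          rw [insert_inter_eq_singleton hx hCR, insert_sdiff_eq_of_disjoint hx hCR,
            card_singleton]
      _ = _ := by
          rw [sum_const, smul_eq_mul, sum_powerset_filter_card (G \ R) (· + 1 ∈ S)
            fun m => srFubini S (#R - 1) (#(G \ R) - m)]
          simp only [smul_eq_mul]

end OrderedPartitions

theorem srFubini_eq_sum_choose {S : Set ℕ} (hS : ∀ s ∈ S, 0 < s) {r : ℕ} (hr : 1 ≤ r)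
    (n : ℕ) :
    srFubini S r n =
      ∑ m ∈ range (n + 1), (if m ∈ S then n.choose m * srFubini S r (n - m) else 0) +
        r * ∑ m ∈ range (n + 1),
          (if m + 1 ∈ S then n.choose m * srFubini S (r - 1) (n - m) else 0) := by
  set R : Finset (Fin (n + r)) := {i | (i : ℕ) < r}
  have hR : #R = r := by simp [R, Fin.card_filter_val_lt]
  have hGR : #(univ \ R) = n := by
    rw [card_sdiff_of_subset (subset_univ R), card_univ, Fintype.card_fin, hR, Nat.add_sub_cancel]
  rw [srFubini, srFubiniSet_eq_orderedPartitions,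
    card_orderedPartitions_eq_sum_choose hS (subset_univ R)
      (univ_nonempty_iff.2 ⟨⟨0, by omega⟩⟩),
    hR, hGR]

theorem finsum_mem_eq_sum_range {M : Type*} [AddCommMonoid M] {S : Set ℕ} {f : ℕ → M}
    {N : ℕ}
    (hf : ∀ s ∈ S, N ≤ s → f s = 0) :
    ∑ᶠ s ∈ S, f s = ∑ s ∈ range N, if s ∈ S then f s else 0 := by
  rw [← sum_filter, finsum_mem_eq_sum_of_inter_support_eq]
  ext s
  simp only [Set.mem_inter_iff, Function.mem_support, coe_filter, mem_range, Set.mem_ofPred_eq]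
  exact ⟨fun ⟨hs, hfs⟩ => ⟨⟨not_le.1 fun h => hfs (hf s hs h), hs⟩, hfs⟩,
    fun ⟨⟨_, hs⟩, hfs⟩ => ⟨hs, hfs⟩⟩

theorem srFubiniZ_natCast_sub (S : Set ℕ) (r : ℕ) {m n : ℕ} (h : m ≤ n) :
    srFubiniZ S r ((n : ℤ) - m) = srFubini S r (n - m) := by
  rw [srFubiniZ, if_pos (by omega), show ((n : ℤ) - m).toNat = n - m by omega]

theorem finsum_choose_mul_srFubiniZ (S : Set ℕ) (r n : ℕ) :
    ∑ᶠ s ∈ S, (n.choose s : ℤ) * srFubiniZ S r ((n : ℤ) - s) =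
      ((∑ m ∈ range (n + 1), if m ∈ S then n.choose m * srFubini S r (n - m) else 0 : ℕ) :
        ℤ) := by
  rw [finsum_mem_eq_sum_range (N := n + 1) fun s _ hs => by simp [Nat.choose_eq_zero_of_lt hs]]
  push_cast
  refine sum_congr rfl fun m hm => ?_
  rw [srFubiniZ_natCast_sub S r (Nat.lt_succ_iff.1 (mem_range.1 hm))]

theorem finsum_choose_pred_mul_srFubiniZ {S : Set ℕ} (hS : ∀ s ∈ S, 0 < s) (r n : ℕ) :
    ∑ᶠ s ∈ S, (n.choose (s - 1) : ℤ) * srFubiniZ S r ((n : ℤ) - ((s : ℤ) - 1)) =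
      ((∑ m ∈ range (n + 1),
          if m + 1 ∈ S then n.choose m * srFubini S r (n - m) else 0 : ℕ) : ℤ) := by
  rw [finsum_mem_eq_sum_range (N := n + 2) fun s _ hs => by
      simp [Nat.choose_eq_zero_of_lt (show n < s - 1 by omega)],
    sum_range_succ', if_neg fun h => (hS 0 h).false, add_zero]
  push_cast
  refine sum_congr rfl fun m hm => ?_
  rw [add_sub_cancel_right, srFubiniZ_natCast_sub S r (Nat.lt_succ_iff.1 (mem_range.1 hm))]

/-- the recurrence
`F_{n,S,r} = Σ_{s∈S} C(n,s)·F_{n−s,S,r} + r·Σ_{s∈S} C(n,s−1)·F_{n−(s−1),S,r−1}`. -/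
theorem srFubini_recurrence (S : Set ℕ) (hS : ∀ s ∈ S, 0 < s) (r n : ℕ) (hr : 1 ≤ r) :
    (srFubini S r n : ℤ) =
      (∑ᶠ s ∈ S, (n.choose s : ℤ) * srFubiniZ S r ((n : ℤ) - s)) +
      r * ∑ᶠ s ∈ S, (n.choose (s - 1) : ℤ) * srFubiniZ S (r - 1) ((n : ℤ) - ((s : ℤ) - 1)) := by
  rw [finsum_choose_mul_srFubiniZ, finsum_choose_pred_mul_srFubiniZ hS,
    srFubini_eq_sum_choose hS hr n]
  norm_cast
end

section
/- Let S be a set of positive integers, r ≥ 0 an integer, and n ≥ 0 an integer. Then the series Σ_{ℓ=0}^{∞} (1/2^ℓ)·C(r+ℓ, ℓ)·(Σ_{k=0}^{n} {n brace k}_{S,r}·(ℓ)_k) of real numbers converges, and F_{n,S,r} = (r!/2^{r+1})·Σ_{ℓ=0}^{∞} (1/2^ℓ)·C(r+ℓ, ℓ)·Σ_{k=0}^{n} {n brace k}_{S,r}·(ℓ)_k, where (ℓ)_k = ℓ(ℓ−1)⋯(ℓ−k+1) is the falling factorial. -/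
open Finset
open scoped Classical

/-!
An ordered partition is one of the `(k + r)!` orderings of the blocks of an
`(S,r)`-partition into `k + r` blocks, so
`F_{n,S,r} = ∑ₖ (k + r)! {n brace k}_{S,r}`. On the analytic side,
`C(r+ℓ,ℓ) (ℓ)ₖ r! = (r+ℓ)_{r+k} = (r+k)! C(ℓ+r, r+k)`, and the negative binomial series
`∑ₘ C(m+j, j) xᵐ = (1-x)^{-(j+1)}` at `x = 1/2` gives
`∑_ℓ 2^{-ℓ} C(r+ℓ,ℓ) (ℓ)ₖ = 2^{r+1} (k+r)! / r!`.
-/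

theorem Finset.card_le_card_of_existsUnique_mem {α : Type*} [Fintype α] {P : Finset (Finset α)}
    (hne : ∀ b ∈ P, b.Nonempty) (huniq : ∀ x, ∃! b, b ∈ P ∧ x ∈ b) : #P ≤ Fintype.card α :=
  calc #P ≤ #(P.biUnion id) :=
        card_le_card_biUnion (fun _ hb _ hb' hbb' => disjoint_left.2 fun x hx hx' =>
          hbb' ((huniq x).unique ⟨hb, hx⟩ ⟨hb', hx'⟩)) hne
    _ ≤ Fintype.card α := card_le_univ _

section
variable {S : Set ℕ} {r n : ℕ}

theorem le_card_of_separates_initial {P : Finset (Finset (Fin (n + r)))}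
    (hcover : ∀ x, ∃ b ∈ P, x ∈ b)
    (hsep : ∀ i j : Fin (n + r), (i : ℕ) < r → (j : ℕ) < r → i ≠ j → ∀ b ∈ P, i ∈ b → j ∉ b) :
    r ≤ #P := by
  simpa using card_le_card_of_forall_subsingleton (s := (univ : Finset (Fin r)))
    (fun i b => Fin.castLE (Nat.le_add_left r n) i ∈ b) (fun i _ => hcover _)
    fun b hb i hi j hj => by_contra fun hij =>
      hsep _ _ (by simp) (by simp) (by simpa [Fin.ext_iff] using hij) b hb hi.2 hj.2

theorem le_of_mem_srStirlingSet {k : ℕ} {P : Finset (Finset (Fin (n + r)))}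
    (hP : P ∈ srStirlingSet S r n k) : k ≤ n := by
  have := card_le_card_of_existsUnique_mem (fun b hb => (hP.1 b hb).1) hP.2.2.1
  rw [hP.2.1, Fintype.card_fin] at this
  omega

theorem nodup_of_mem_srFubiniSet {L : List (Finset (Fin (n + r)))}
    (hL : L ∈ srFubiniSet S r n) : L.Nodup :=
  hL.2.1.imp_of_mem fun hb _ hdisj hbb' =>
    have ⟨x, hx⟩ := (hL.1 _ hb).1
    hdisj x hx (hbb' ▸ hx)

theorem existsUnique_of_mem_srFubiniSet {L : List (Finset (Fin (n + r)))}
    (hL : L ∈ srFubiniSet S r n) (x : Fin (n + r)) : ∃! b, b ∈ L ∧ x ∈ b := by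
  obtain ⟨b, hb, hx⟩ := hL.2.2.1 x
  refine ⟨b, ⟨hb, hx⟩, fun b' ⟨hb', hx'⟩ => by_contra fun hne => ?_⟩
  have : Std.Symm fun (b b' : Finset (Fin (n + r))) => ∀ x ∈ b, x ∉ b' :=
    ⟨fun _ _ h x hx hx' => h x hx' hx⟩
  exact hL.2.1.forall hb' hb hne x hx' hx

theorem toFinset_mem_srStirlingSet {L : List (Finset (Fin (n + r)))}
    (hL : L ∈ srFubiniSet S r n) : L.toFinset ∈ srStirlingSet S r n (L.length - r) := by
  have hcard : #L.toFinset = L.length := List.toFinset_card_of_nodup (nodup_of_mem_srFubiniSet hL)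
  have hr : r ≤ #L.toFinset := le_card_of_separates_initial
    (fun x => by simpa using hL.2.2.1 x)
    fun i j hi hj hij b hb => hL.2.2.2 i j hi hj hij b (List.mem_toFinset.1 hb)
  refine ⟨fun b hb => hL.1 b (List.mem_toFinset.1 hb), by omega, fun x => ?_,
    fun i j hi hj hij b hb => hL.2.2.2 i j hi hj hij b (List.mem_toFinset.1 hb)⟩
  simpa using existsUnique_of_mem_srFubiniSet hL x

theorem mem_srFubiniSet_and_toFinset_eq_iff {k : ℕ} {P : Finset (Finset (Fin (n + r)))}
    (hP : P ∈ srStirlingSet S r n k) (L : List (Finset (Fin (n + r)))) :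
    L ∈ srFubiniSet S r n ∧ L.toFinset = P ↔ L.Perm P.toList := by
  refine ⟨fun ⟨hL, hLP⟩ => List.perm_of_nodup_nodup_toFinset_eq (nodup_of_mem_srFubiniSet hL)
    P.nodup_toList (by rw [hLP, toList_toFinset]), fun hperm => ?_⟩
  have hmem : ∀ b, b ∈ L ↔ b ∈ P := fun b => by rw [hperm.mem_iff, mem_toList]
  refine ⟨⟨fun b hb => hP.1 b ((hmem b).1 hb), ?_, fun x => ?_,
    fun i j hi hj hij b hb => hP.2.2.2 i j hi hj hij b ((hmem b).1 hb)⟩, ?_⟩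
  · exact (hperm.nodup_iff.2 P.nodup_toList).imp_of_mem fun ha hb hab x hxa hxb =>
      hab ((hP.2.2.1 x).unique ⟨(hmem _).1 ha, hxa⟩ ⟨(hmem _).1 hb, hxb⟩)
  · obtain ⟨b, ⟨hb, hx⟩, -⟩ := hP.2.2.1 x
    exact ⟨b, (hmem b).2 hb, hx⟩
  · rw [List.toFinset_eq_of_perm _ _ hperm, toList_toFinset]

end

theorem srFubini_eq_sum (S : Set ℕ) (r n : ℕ) :
    srFubini S r n = ∑ k ∈ range (n + 1), (k + r).factorial * srStirling S r n k := by
  have hfin : (srFubiniSet S r n).Finite :=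
    (List.finite_length_le _ (n + r)).subset fun L hL => by
      have := le_of_mem_srStirlingSet (toFinset_mem_srStirlingSet hL)
      exact show L.length ≤ n + r by omega
  set T := fun k => (srStirlingSet S r n k).toFinset
  have hmaps : ∀ L ∈ hfin.toFinset, L.toFinset ∈ (range (n + 1)).biUnion T := fun L hL => by
    have hL := hfin.mem_toFinset.1 hL
    have := le_of_mem_srStirlingSet (toFinset_mem_srStirlingSet hL)
    simpa [T] using ⟨L.length - r, by omega, toFinset_mem_srStirlingSet hL⟩
  have hdisj : (range (n + 1) : Set ℕ).PairwiseDisjoint T := fun k _ k' _ hkk' =>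
    disjoint_left.2 fun P hP hP' => hkk' <| by
      have := (Set.mem_toFinset.1 hP).2.1
      have := (Set.mem_toFinset.1 hP').2.1
      omega
  have hfiber : ∀ k, ∀ P ∈ T k, #{L ∈ hfin.toFinset | L.toFinset = P} = (k + r).factorial := by
    intro k P hP
    have hP := Set.mem_toFinset.1 hP
    have : {L ∈ hfin.toFinset | L.toFinset = P} = P.toList.permutations.toFinset := by
      ext L
      simpa using mem_srFubiniSet_and_toFinset_eq_iff hP L
    rw [this, List.toFinset_card_of_nodup (List.nodup_permutations _ P.nodup_toList),
      List.length_permutations, length_toList, hP.2.1]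
  rw [srFubini, Nat.card_eq_card_finite_toFinset hfin, card_eq_sum_card_fiberwise hmaps,
    sum_biUnion hdisj]
  refine sum_congr rfl fun k _ => ?_
  rw [sum_congr rfl (hfiber k), sum_const, smul_eq_mul, srStirling, Nat.card_eq_card_toFinset,
    mul_comm]

theorem Nat.choose_mul_descFactorial_mul_factorial (r ℓ k : ℕ) :
    (r + ℓ).choose ℓ * ℓ.descFactorial k * r.factorial = (r + ℓ).descFactorial (r + k) := by
  have h := Nat.descFactorial_mul_descFactorial (n := r + ℓ) (Nat.le_add_right r k)
  rw [Nat.add_sub_cancel_left, Nat.add_sub_cancel_left] at h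
  rw [← h, Nat.descFactorial_eq_factorial_mul_choose (r + ℓ) r, ← Nat.choose_symm_add]
  ring

theorem hasSum_descFactorial_mul_geometric {𝕜 : Type*} [NormedField 𝕜] (r k : ℕ) {x : 𝕜}
    (hx : ‖x‖ < 1) :
    HasSum (fun ℓ : ℕ => ((r + ℓ).descFactorial (r + k) : 𝕜) * x ^ ℓ)
      ((r + k).factorial * x ^ k / (1 - x) ^ (r + k + 1)) := by
  have hshift : HasSum (fun m : ℕ => ((r + (m + k)).descFactorial (r + k) : 𝕜) * x ^ (m + k))
      ((r + k).factorial * x ^ k / (1 - x) ^ (r + k + 1)) := by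
    rw [div_eq_mul_one_div]
    refine ((hasSum_choose_mul_geometric_of_norm_lt_one (r + k) hx).mul_left
      ((r + k).factorial * x ^ k)).congr_fun fun m => ?_
    rw [show r + (m + k) = m + (r + k) by ring, Nat.descFactorial_eq_factorial_mul_choose]
    push_cast
    ring
  -- the first `k` terms vanish
  refine (hasSum_nat_add_iff' k).1 ?_
  rwa [Finset.sum_eq_zero fun ℓ hℓ => ?_, sub_zero]
  rw [Nat.descFactorial_eq_zero_iff_lt.2 (Nat.add_lt_add_left (mem_range.1 hℓ) r), Nat.cast_zero, zero_mul]

theorem hasSum_choose_mul_descFactorial_div_two_pow (r k : ℕ) :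
    HasSum (fun ℓ : ℕ => (1 / 2 ^ ℓ : ℝ) * ((r + ℓ).choose ℓ : ℝ) * (ℓ.descFactorial k : ℝ))
      (2 ^ (r + 1) / r.factorial * (k + r).factorial) := by
  have hr : (r.factorial : ℝ) ≠ 0 := by positivity
  have hvalue : ((r + k).factorial : ℝ) * (1 / 2) ^ k / (1 - 1 / 2) ^ (r + k + 1) / r.factorial
      = 2 ^ (r + 1) / r.factorial * (k + r).factorial := by
    rw [add_comm k r, one_div, inv_pow, show (1 - 2⁻¹ : ℝ) = 2⁻¹ by norm_num, inv_pow]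
    field_simp
    ring
  rw [← hvalue]
  refine ((hasSum_descFactorial_mul_geometric r k (by norm_num)).div_const _).congr_fun
    fun ℓ => ?_
  rw [← Nat.choose_mul_descFactorial_mul_factorial]
  push_cast
  rw [one_div_pow]
  field_simp

theorem hasSum_choose_mul_sum_descFactorial_div_two_pow (s : ℕ → ℝ) (r n : ℕ) :
    HasSum (fun ℓ : ℕ => (1 / 2 ^ ℓ : ℝ) * ((r + ℓ).choose ℓ : ℝ) *
      ∑ k ∈ range (n + 1), s k * (ℓ.descFactorial k : ℝ))
      (2 ^ (r + 1) / r.factorial * ∑ k ∈ range (n + 1), (k + r).factorial * s k) := by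
  simp only [mul_sum, ← mul_assoc]
  refine (hasSum_sum fun k _ =>
    (hasSum_choose_mul_descFactorial_div_two_pow r k).mul_right (s k)).congr_fun fun ℓ => ?_
  exact sum_congr rfl fun k _ => by ring

theorem srFubini_series_general (S : Set ℕ) (r n : ℕ) :
    Summable (fun ℓ : ℕ => (1 / 2 ^ ℓ : ℝ) * ((r + ℓ).choose ℓ : ℝ) *
      ∑ k ∈ Finset.range (n + 1), (srStirling S r n k : ℝ) * (ℓ.descFactorial k : ℝ)) ∧
    (srFubini S r n : ℝ) =
      ((r.factorial : ℝ) / 2 ^ (r + 1)) *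
        ∑' ℓ : ℕ, (1 / 2 ^ ℓ : ℝ) * ((r + ℓ).choose ℓ : ℝ) *
          ∑ k ∈ Finset.range (n + 1), (srStirling S r n k : ℝ) * (ℓ.descFactorial k : ℝ) := by
  have h := hasSum_choose_mul_sum_descFactorial_div_two_pow (fun k => (srStirling S r n k : ℝ)) r n
  refine ⟨h.summable, ?_⟩
  rw [h.tsum_eq, srFubini_eq_sum]
  push_cast
  field_simp

/-- the Dobinski-type formula
`F_{n,S,r} = (r!/2^{r+1})·Σ_{ℓ≥0} (1/2^ℓ)·C(r+ℓ,ℓ)·Σ_{k=0}^n {n brace k}_{S,r}·(ℓ)_k`,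
the series being convergent. -/
theorem srFubini_series (S : Set ℕ) (hS : ∀ s ∈ S, 0 < s) (r n : ℕ) :
    Summable (fun ℓ : ℕ => (1 / 2 ^ ℓ : ℝ) * ((r + ℓ).choose ℓ : ℝ) *
      ∑ k ∈ Finset.range (n + 1), (srStirling S r n k : ℝ) * (ℓ.descFactorial k : ℝ)) ∧
    (srFubini S r n : ℝ) =
      ((r.factorial : ℝ) / 2 ^ (r + 1)) *
        ∑' ℓ : ℕ, (1 / 2 ^ ℓ : ℝ) * ((r + ℓ).choose ℓ : ℝ) *
          ∑ k ∈ Finset.range (n + 1), (srStirling S r n k : ℝ) * (ℓ.descFactorial k : ℝ) :=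
  srFubini_series_general S r n
end

section
/- Let S be a set of positive integers, r ≥ 0 an integer, and n ≥ 0 an integer. Then the series Σ_{ℓ=0}^{∞} (1/2^ℓ)·C(r+ℓ, ℓ)·(Σ_{k=0}^{n} L_{S,r}(n,k)·(ℓ)_k) of real numbers converges, and D_{n,S,r} = (r!/2^{r+1})·Σ_{ℓ=0}^{∞} (1/2^ℓ)·C(r+ℓ, ℓ)·Σ_{k=0}^{n} L_{S,r}(n,k)·(ℓ)_k, where (ℓ)_k = ℓ(ℓ−1)⋯(ℓ−k+1) is the falling factorial. -/
open Finset
open scoped Classical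

/-- A partition of `Fin N` into nonempty lists of distinct elements:
every element lies in exactly one list of `P`. -/
def IsListPartition {N : ℕ} (P : Finset (List (Fin N))) : Prop :=
  (∀ l ∈ P, l ≠ [] ∧ l.Nodup) ∧ ∀ x : Fin N, ∃! l, l ∈ P ∧ x ∈ l

/-- The set of partitions of `{1,…,n+r}` (encoded as `Fin (n+r)`) into `k+r` nonempty
lists whose lengths lie in `S`, such that the first `r` elements lie in distinct lists. -/
def srLahSet (S : Set ℕ) (r n k : ℕ) : Set (Finset (List (Fin (n + r)))) :=
  {P | IsListPartition P ∧ P.card = k + r ∧ (∀ l ∈ P, l.length ∈ S) ∧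
    ∀ i j : Fin (n + r), (i : ℕ) < r → (j : ℕ) < r → i ≠ j →
      ∀ l ∈ P, i ∈ l → j ∉ l}

/-- The `(S,r)`-Lah number `L_{S,r}(n,k)`. -/
noncomputable def srLah (S : Set ℕ) (r n k : ℕ) : ℕ := Nat.card (srLahSet S r n k)

/-- The `(S,r)`-Lah number with integer arguments, zero for negative arguments. -/
noncomputable def srLahZ (S : Set ℕ) (r : ℕ) (n k : ℤ) : ℤ :=
  if 0 ≤ n ∧ 0 ≤ k then srLah S r n.toNat k.toNat else 0

/-- The set of doubly ordered `(S,r)`-partitions of `{1,…,n+r}`: sequences of pairwise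
disjoint nonempty lists of distinct elements covering everything, with lengths in `S`,
the first `r` elements in distinct lists. -/
def srDoublySet (S : Set ℕ) (r n : ℕ) : Set (List (List (Fin (n + r)))) :=
  {L | (∀ l ∈ L, l ≠ [] ∧ l.Nodup ∧ l.length ∈ S) ∧
    L.Pairwise (fun l l' => ∀ x ∈ l, x ∉ l') ∧
    (∀ x : Fin (n + r), ∃ l ∈ L, x ∈ l) ∧
    ∀ i j : Fin (n + r), (i : ℕ) < r → (j : ℕ) < r → i ≠ j →
      ∀ l ∈ L, i ∈ l → j ∉ l}

/-- The number `D_{n,S,r}` of doubly ordered `(S,r)`-partitions. -/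
noncomputable def srDoubly (S : Set ℕ) (r n : ℕ) : ℕ := Nat.card (srDoublySet S r n)

/-- `D_{n,S,r}` with an integer argument, zero for negative arguments. -/
noncomputable def srDoublyZ (S : Set ℕ) (r : ℕ) (n : ℤ) : ℤ :=
  if 0 ≤ n then srDoubly S r n.toNat else 0

/-!
Each doubly ordered `(S,r)`-partition is an ordering of the blocks of an `(S,r)`-Lah partition,
so `D_{n,S,r} = ∑ₖ (k+r)! L_{S,r}(n,k)`. On the analytic side,
`r! C(r+ℓ,ℓ) (ℓ)ₖ = (k+r)! C(r+ℓ,r+k)`, and the negative binomial series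
`∑_ℓ C(r+ℓ,r+k) xˡ = xᵏ/(1-x)^{r+k+1}` at `x = 1/2` turns the `k`-th summand of the series
into `2^{r+1} (k+r)!/r!`.
-/

open Nat

theorem Nat.factorial_mul_choose_mul_descFactorial (r ℓ k : ℕ) :
    r ! * (r + ℓ).choose ℓ * ℓ.descFactorial k = (k + r)! * (r + ℓ).choose (r + k) := by
  have h := Nat.descFactorial_mul_descFactorial (n := r + ℓ) (Nat.le_add_right r k)
  rw [Nat.add_sub_cancel_left, Nat.add_sub_cancel_left] at h
  rw [← Nat.choose_symm_add, ← Nat.descFactorial_eq_factorial_mul_choose, mul_comm, h,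
    Nat.descFactorial_eq_factorial_mul_choose, add_comm k]

theorem hasSum_choose_add_mul_geometric {𝕜 : Type*} [NormedField 𝕜] (r k : ℕ) {x : 𝕜}
    (hx : ‖x‖ < 1) :
    HasSum (fun ℓ ↦ ((r + ℓ).choose (r + k) : 𝕜) * x ^ ℓ) (x ^ k / (1 - x) ^ (r + k + 1)) := by
  have hshift : HasSum (fun ℓ ↦ ((r + (ℓ + k)).choose (r + k) : 𝕜) * x ^ (ℓ + k))
      (x ^ k / (1 - x) ^ (r + k + 1)) := by
    rw [← one_div_mul_eq_div]
    refine ((hasSum_choose_mul_geometric_of_norm_lt_one (r + k) hx).mul_right (x ^ k)).congr_fun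
      fun ℓ ↦ ?_
    rw [show r + (ℓ + k) = ℓ + (r + k) by ring, pow_add, mul_assoc]
  have hlow : ∑ i ∈ range k, ((r + i).choose (r + k) : 𝕜) * x ^ i = 0 :=
    sum_eq_zero fun i hi ↦ by
      rw [Nat.choose_eq_zero_of_lt (by simp at hi; omega), Nat.cast_zero, zero_mul]
  rwa [← hasSum_nat_add_iff' k, hlow, sub_zero]

theorem hasSum_half_pow_choose_mul_descFactorial (r k : ℕ) :
    HasSum (fun ℓ : ℕ ↦ (1 / 2 ^ ℓ : ℝ) * ((r + ℓ).choose ℓ : ℝ) * (ℓ.descFactorial k : ℝ))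
      (2 ^ (r + 1) * (k + r)! / r !) := by
  have h := (hasSum_choose_add_mul_geometric r k (x := (1 / 2 : ℝ)) (by norm_num)).mul_left
    ((k + r)! / r ! : ℝ)
  have hval : ((k + r)! / r ! : ℝ) * ((1 / 2) ^ k / (1 - 1 / 2) ^ (r + k + 1)) =
      2 ^ (r + 1) * (k + r)! / r ! := by
    rw [show (1 - 1 / 2 : ℝ) = 1 / 2 by norm_num, show r + k + 1 = r + 1 + k by ring, one_div_pow,
      one_div_pow, pow_add]
    field_simp
  rw [hval] at h
  simp only [one_div_pow] at h
  refine h.congr_fun fun ℓ ↦ ?_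
  have hcoef := congrArg (Nat.cast (R := ℝ)) (Nat.factorial_mul_choose_mul_descFactorial r ℓ k)
  push_cast at hcoef
  field_simp
  linear_combination hcoef

theorem hasSum_half_pow_choose_mul_sum_descFactorial (r : ℕ) (c : ℕ → ℝ) (s : Finset ℕ) :
    HasSum (fun ℓ : ℕ ↦ (1 / 2 ^ ℓ : ℝ) * ((r + ℓ).choose ℓ : ℝ) *
        ∑ k ∈ s, c k * (ℓ.descFactorial k : ℝ))
      (2 ^ (r + 1) / r ! * ∑ k ∈ s, c k * (k + r)!) := by
  have h := hasSum_sum (s := s) fun k _ ↦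
    (hasSum_half_pow_choose_mul_descFactorial r k).mul_left (c k)
  have hval : ∑ k ∈ s, c k * (2 ^ (r + 1) * (k + r)! / r ! : ℝ) =
      2 ^ (r + 1) / r ! * ∑ k ∈ s, c k * (k + r)! := by
    rw [mul_sum]
    exact sum_congr rfl fun k _ ↦ by ring
  rw [hval] at h
  refine h.congr_fun fun ℓ ↦ ?_
  rw [mul_sum]
  exact sum_congr rfl fun k _ ↦ by ring

section Combinatorics

variable {S : Set ℕ} {r n k : ℕ}

theorem IsListPartition.card_le {N : ℕ} {P : Finset (List (Fin N))} (hP : IsListPartition P) :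
    P.card ≤ N := by
  choose block hblock using fun x ↦ (hP.2 x).exists
  calc P.card ≤ (univ : Finset (Fin N)).card := card_le_card_of_surjOn block ?_
    _ = N := Finset.card_fin N
  intro l hl
  obtain ⟨x, hx⟩ := List.exists_mem_of_ne_nil l (hP.1 l hl).1
  exact ⟨x, mem_coe.2 (mem_univ x), (hP.2 x).unique (hblock x) ⟨hl, hx⟩⟩

theorem IsListPartition.le_card {P : Finset (List (Fin (n + r)))} (hP : IsListPartition P)
    (hsep : ∀ i j : Fin (n + r), (i : ℕ) < r → (j : ℕ) < r → i ≠ j → ∀ l ∈ P, i ∈ l → j ∉ l) :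
    r ≤ P.card := by
  choose block hblock using fun x ↦ (hP.2 x).exists
  let ι : Fin r → Fin (n + r) := Fin.castLE (Nat.le_add_left r n)
  calc r = (univ : Finset (Fin r)).card := (Finset.card_fin r).symm
    _ ≤ P.card := card_le_card_of_injOn (block ∘ ι) (fun i _ ↦ (hblock (ι i)).1) ?_
  intro i _ j _ hij
  by_contra hne
  exact hsep (ι i) (ι j) i.isLt j.isLt ((Fin.castLE_injective _).ne hne) _ (hblock (ι i)).1
    (hblock (ι i)).2 (by rw [show block (ι i) = block (ι j) from hij]; exact (hblock (ι j)).2)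

theorem le_of_mem_srLahSet {P : Finset (List (Fin (n + r)))} (hP : P ∈ srLahSet S r n k) :
    k ≤ n := by
  have hcard := hP.2.1
  have := hP.1.card_le
  omega

theorem srLahSet_finite : (srLahSet S r n k).Finite := by
  refine ((List.finite_length_le (Fin (n + r)) (n + r)).finite_subsets.preimage
    coe_injective.injOn).subset fun P hP l hl ↦ ?_
  simpa using (hP.1.1 l hl).2.length_le_card

theorem length_eq_of_perm_toList {P : Finset (List (Fin (n + r)))} (hP : P ∈ srLahSet S r n k)
    {L : List (List (Fin (n + r)))} (hL : L.Perm P.toList) : L.length = k + r := by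
  rw [hL.length_eq, length_toList, hP.2.1]

theorem mem_srDoublySet_of_perm {L L' : List (List (Fin (n + r)))} (hLL' : L.Perm L')
    (hL : L ∈ srDoublySet S r n) : L' ∈ srDoublySet S r n := by
  obtain ⟨hblocks, hdisj, hcover, hsep⟩ := hL
  refine ⟨fun l hl ↦ hblocks l (hLL'.mem_iff.2 hl),
    (hLL'.pairwise_iff fun h x hx hx' ↦ h x hx' hx).1 hdisj, fun x ↦ ?_,
    fun i j hi hj hij l hl ↦ hsep i j hi hj hij l (hLL'.mem_iff.2 hl)⟩
  obtain ⟨l, hl, hx⟩ := hcover x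
  exact ⟨l, hLL'.mem_iff.1 hl, hx⟩

theorem toList_mem_srDoublySet {P : Finset (List (Fin (n + r)))} (hP : P ∈ srLahSet S r n k) :
    P.toList ∈ srDoublySet S r n := by
  obtain ⟨⟨hblocks, hunique⟩, -, hlen, hsep⟩ := hP
  refine ⟨fun l hl ↦ ?_, ?_, fun x ↦ ?_,
    fun i j hi hj hij l hl ↦ hsep i j hi hj hij l (mem_toList.1 hl)⟩
  · rw [mem_toList] at hl
    exact ⟨(hblocks l hl).1, (hblocks l hl).2, hlen l hl⟩
  · refine P.nodup_toList.imp_of_mem fun ha hb hab x hxa hxb ↦ hab ?_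
    exact (hunique x).unique ⟨mem_toList.1 ha, hxa⟩ ⟨mem_toList.1 hb, hxb⟩
  · obtain ⟨l, ⟨hl, hx⟩, -⟩ := hunique x
    exact ⟨l, mem_toList.2 hl, hx⟩

theorem nodup_of_mem_srDoublySet {L : List (List (Fin (n + r)))} (hL : L ∈ srDoublySet S r n) :
    L.Nodup := by
  refine hL.2.1.imp_of_mem fun ha _ hdisj hab ↦ ?_
  subst hab
  obtain ⟨x, hx⟩ := List.exists_mem_of_ne_nil _ (hL.1 _ ha).1
  exact hdisj x hx hx

theorem toFinset_mem_srLahSet {L : List (List (Fin (n + r)))} (hL : L ∈ srDoublySet S r n) :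
    L.toFinset ∈ srLahSet S r n (L.length - r) := by
  have hnodup := nodup_of_mem_srDoublySet hL
  obtain ⟨hblocks, hdisj, hcover, hsep⟩ := hL
  have : Std.Symm fun l l' : List (Fin (n + r)) ↦ ∀ x ∈ l, x ∉ l' :=
    ⟨fun _ _ h x hx hx' ↦ h x hx' hx⟩
  have hsep' : ∀ i j : Fin (n + r), (i : ℕ) < r → (j : ℕ) < r → i ≠ j →
      ∀ l ∈ L.toFinset, i ∈ l → j ∉ l := fun i j hi hj hij l hl ↦
    hsep i j hi hj hij l (List.mem_toFinset.1 hl)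
  have hpart : IsListPartition L.toFinset := by
    refine ⟨fun l hl ↦ ?_, fun x ↦ ?_⟩
    · obtain ⟨hne, hnd, -⟩ := hblocks l (List.mem_toFinset.1 hl)
      exact ⟨hne, hnd⟩
    · obtain ⟨l, hl, hx⟩ := hcover x
      refine ⟨l, ⟨List.mem_toFinset.2 hl, hx⟩, fun l' ⟨hl', hx'⟩ ↦ ?_⟩
      by_contra hne
      exact hdisj.forall (List.mem_toFinset.1 hl') hl hne x hx' hx
  have hcard := List.toFinset_card_of_nodup hnodup
  have hr := hpart.le_card hsep'
  exact ⟨hpart, by omega, fun l hl ↦ (hblocks l (List.mem_toFinset.1 hl)).2.2, hsep'⟩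

theorem mem_srDoublySet_iff {L : List (List (Fin (n + r)))} :
    L ∈ srDoublySet S r n ↔ ∃ k ≤ n, ∃ P ∈ srLahSet S r n k, L.Perm P.toList := by
  refine ⟨fun hL ↦ ?_, fun ⟨k, _, P, hP, hperm⟩ ↦
    mem_srDoublySet_of_perm hperm.symm (toList_mem_srDoublySet hP)⟩
  have hP := toFinset_mem_srLahSet hL
  exact ⟨_, le_of_mem_srLahSet hP, _, hP,
    (List.toFinset_toList (nodup_of_mem_srDoublySet hL)).symm⟩

theorem srDoubly_eq_sum (S : Set ℕ) (r n : ℕ) :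
    srDoubly S r n = ∑ k ∈ range (n + 1), (k + r)! * srLah S r n k := by
  let lah k := (srLahSet_finite (S := S) (r := r) (n := n) (k := k)).toFinset
  have hD : srDoublySet S r n = ↑((range (n + 1)).biUnion fun k ↦
      (lah k).biUnion fun P ↦ P.toList.permutations.toFinset) := by
    ext L
    simp [mem_srDoublySet_iff, lah]
  rw [srDoubly, hD, Nat.card_coe_set_eq, Set.ncard_coe_finset, card_biUnion]
  · refine sum_congr rfl fun k _ ↦ ?_
    rw [card_biUnion, sum_const_nat fun P hP ↦ ?_, srLah, Nat.card_coe_set_eq,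
      Set.ncard_eq_toFinset_card _ srLahSet_finite, mul_comm]
    · rw [Set.Finite.mem_toFinset] at hP
      rw [List.toFinset_card_of_nodup (List.nodup_permutations _ P.nodup_toList),
        List.length_permutations, length_toList, hP.2.1]
    · intro P hP P' hP' hne
      refine disjoint_left.2 fun L hL hL' ↦ hne ?_
      simp only [List.mem_toFinset, List.mem_permutations] at hL hL'
      rw [← toList_toFinset P, ← toList_toFinset P', ← List.toFinset_eq_of_perm _ _ hL,
        ← List.toFinset_eq_of_perm _ _ hL']
  · intro k _ k' _ hne
    refine disjoint_left.2 fun L hL hL' ↦ hne ?_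
    simp only [mem_biUnion, List.mem_toFinset, List.mem_permutations, Set.Finite.mem_toFinset,
      lah] at hL hL'
    obtain ⟨P, hP, hL⟩ := hL
    obtain ⟨P', hP', hL'⟩ := hL'
    have := (length_eq_of_perm_toList hP hL).symm.trans (length_eq_of_perm_toList hP' hL')
    omega

end Combinatorics

theorem srDoubly_series_general (S : Set ℕ) (r n : ℕ) :
    Summable (fun ℓ : ℕ => (1 / 2 ^ ℓ : ℝ) * ((r + ℓ).choose ℓ : ℝ) *
      ∑ k ∈ Finset.range (n + 1), (srLah S r n k : ℝ) * (ℓ.descFactorial k : ℝ)) ∧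
    (srDoubly S r n : ℝ) =
      ((r.factorial : ℝ) / 2 ^ (r + 1)) *
        ∑' ℓ : ℕ, (1 / 2 ^ ℓ : ℝ) * ((r + ℓ).choose ℓ : ℝ) *
          ∑ k ∈ Finset.range (n + 1), (srLah S r n k : ℝ) * (ℓ.descFactorial k : ℝ) := by
  have h := hasSum_half_pow_choose_mul_sum_descFactorial r (fun k ↦ (srLah S r n k : ℝ))
    (range (n + 1))
  refine ⟨h.summable, ?_⟩
  rw [h.tsum_eq, srDoubly_eq_sum]
  push_cast
  field_simp
  exact sum_congr rfl fun k _ ↦ mul_comm _ _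

/-- the Dobinski-type formula
`D_{n,S,r} = (r!/2^{r+1})·Σ_{ℓ≥0} (1/2^ℓ)·C(r+ℓ,ℓ)·Σ_{k=0}^n L_{S,r}(n,k)·(ℓ)_k`,
the series being convergent. -/
theorem srDoubly_series (S : Set ℕ) (hS : ∀ s ∈ S, 0 < s) (r n : ℕ) :
    Summable (fun ℓ : ℕ => (1 / 2 ^ ℓ : ℝ) * ((r + ℓ).choose ℓ : ℝ) *
      ∑ k ∈ Finset.range (n + 1), (srLah S r n k : ℝ) * (ℓ.descFactorial k : ℝ)) ∧
    (srDoubly S r n : ℝ) =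
      ((r.factorial : ℝ) / 2 ^ (r + 1)) *
        ∑' ℓ : ℕ, (1 / 2 ^ ℓ : ℝ) * ((r + ℓ).choose ℓ : ℝ) *
          ∑ k ∈ Finset.range (n + 1), (srLah S r n k : ℝ) * (ℓ.descFactorial k : ℝ) :=
  srDoubly_series_general S r n
end
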